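/- arXiv:2601.06447 — 3 statements merged into one kernel-verified Lean document; each statement's English description precedes it below -/
import Mathlib

section
/- For every positive integer l, every word w ∈ {0,1}^l and every positive integer n, the map φ_{l,w} : {0,1}^n → {0,1}^n is a bijection, with two-sided inverse ψ_{l,w}; in particular φ_{l,w}(ψ_{l,w}(v)) = v for every v ∈ {0,1}^n. -/
/-- Parity of a list of bits (`true` ↔ an odd number of `true`s, i.e. odd sum). -/
def parity (L : List Bool) : Bool := L.foldr Bool.xor false

/-- The sequence `w_1 … w_l v_1 … v_m` (as a list) produced by the two-faced
transformation `φ_{l,w}`: the first `w.length` entries are the word `w`, and each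
subsequent entry is `v_i = x_i` if the sum of the preceding `w.length` entries is even,
and `v_i = 1 - x_i` if it is odd (bits are booleans, `true` ↔ 1, so flipping is `xor true`). -/
def phiList (w : List Bool) (x : ℕ → Bool) : ℕ → List Bool
  | 0 => w
  | m + 1 => phiList w x m ++ [Bool.xor (x m) (parity ((phiList w x m).drop m))]

/-- The full transformed sequence `v_{1-l} … v_0 v_1 … v_n` indexed by
absolute positions `0, …, l + n - 1` (position `k` holds `v_{k-l+1}`). -/
def vFull (l n : ℕ) (w : Fin l → Bool) (x : Fin n → Bool) (k : ℕ) : Bool :=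
  (phiList (List.ofFn w) (fun m => if h : m < n then x ⟨m, h⟩ else false) n).getD k false

/-- The two-faced transformation `φ_{l,w} : {0,1}^n → {0,1}^n`. -/
def phi (l n : ℕ) (w : Fin l → Bool) (x : Fin n → Bool) : Fin n → Bool :=
  fun i => vFull l n w x (l + i)

/-- The inverse two-faced transformation on lists: given the prefix `w` and a word `v`,
`u_i = v_i` if the sum of the `w.length` letters of `w ++ v` preceding `v_i` is even,
and `u_i = 1 - v_i` if that sum is odd. -/
def psiList (w v : List Bool) : List Bool :=
  (List.range v.length).map fun k =>
    Bool.xor (v.getD k false) (parity (((w ++ v).drop k).take w.length))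

/-- The transformation `ψ_{l,w} : {0,1}^n → {0,1}^n`. -/
def psi (l n : ℕ) (w : Fin l → Bool) (v : Fin n → Bool) : Fin n → Bool :=
  fun i => (psiList (List.ofFn w) (List.ofFn v)).getD i false

lemma phiList_length (w : List Bool) (x : ℕ → Bool) (m : ℕ) :
    (phiList w x m).length = w.length + m := by
  induction m with
  | zero => rfl
  | succ m ih => simp [phiList, ih]; omega

lemma phiList_take (w : List Bool) (x : ℕ → Bool) {k m : ℕ} (h : k ≤ m) :
    (phiList w x m).take (w.length + k) = phiList w x k := by
  induction m with
  | zero =>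
    have hk0 : k = 0 := Nat.le_zero.mp h
    subst hk0; simp [phiList]
  | succ m ih =>
    rcases Nat.lt_or_ge k (m+1) with h' | h'
    · rw [phiList, List.take_append_of_le_length (by rw [phiList_length]; omega),
        ih (by omega)]
    · have : k = m + 1 := by omega
      subst this
      exact List.take_of_length_le (phiList_length w x (m+1)).le

lemma phiList_getD (w : List Bool) (x : ℕ → Bool) {k m : ℕ} (h : k < m) :
    (phiList w x m).getD (w.length + k) false
      = Bool.xor (x k) (parity ((phiList w x k).drop k)) := by
  have h1 : (phiList w x m).take (w.length + (k+1)) = phiList w x (k+1) :=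
    phiList_take w x h
  have hlen : w.length + k < (phiList w x m).length := by rw [phiList_length]; omega
  have h2 : (phiList w x (k+1)).getD (w.length + k) false
      = (phiList w x m).getD (w.length + k) false := by
    rw [← h1, List.getD_eq_getElem _ _ (by simp [phiList_length]; omega),
      List.getElem_take, ← List.getD_eq_getElem _ _ hlen]
  rw [← h2]
  have h3 : phiList w x (k+1)
      = phiList w x k ++ [Bool.xor (x k) (parity ((phiList w x k).drop k))] := rfl
  rw [h3, List.getD_append_right _ _ _ _ (by rw [phiList_length])]
  simp [phiList_length]

lemma psiList_getD (w v : List Bool) {i : ℕ} (h : i < v.length) :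
    (psiList w v).getD i false
      = Bool.xor (v.getD i false) (parity (((w ++ v).drop i).take w.length)) := by
  rw [psiList, List.getD_eq_getElem _ _ (by simpa using h)]
  simp

/-- For every positive integer `l`, word `w ∈ {0,1}^l` and positive integer `n`,
the map `φ_{l,w} : {0,1}^n → {0,1}^n` is a bijection with two-sided inverse `ψ_{l,w}`;
in particular `φ_{l,w}(ψ_{l,w}(v)) = v` for every `v ∈ {0,1}^n`. -/
theorem phi_bijective (l n : ℕ) (hl : 1 ≤ l) (hn : 1 ≤ n) (w : Fin l → Bool) :
    Function.Bijective (phi l n w) ∧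
      Function.LeftInverse (psi l n w) (phi l n w) ∧
      Function.RightInverse (psi l n w) (phi l n w) := by
  set W : List Bool := List.ofFn w with hW
  have hWlen : W.length = l := by simp [hW]
  -- Left inverse
  have left : Function.LeftInverse (psi l n w) (phi l n w) := by
    intro x
    set X : ℕ → Bool := fun m => if h : m < n then x ⟨m, h⟩ else false with hX
    set L : List Bool := phiList W X n with hL
    have hLlen : L.length = l + n := by rw [hL, phiList_length, hWlen]
    have hsplit : W ++ List.ofFn (phi l n w x) = L := by
      have h1 : L.take l = W := by
        have := phiList_take W X (Nat.zero_le n)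
        simpa [phiList, hWlen] using this
      have h2 : List.ofFn (phi l n w x) = L.drop l := by
        apply List.ext_getElem
        · simp [hLlen]
        · intro j hj hj'
          rw [List.getElem_ofFn]
          have hjn : j < n := by simpa using hj
          rw [List.getElem_drop]
          simp only [phi, vFull, ← hW, ← hX, ← hL]
          rw [List.getD_eq_getElem _ _ (by rw [hLlen]; omega)]
      rw [h2, ← h1, List.take_append_drop]
    funext i
    simp only [psi]
    rw [psiList_getD _ _ (by simpa using i.isLt)]
    rw [hsplit]
    have hv : (List.ofFn (phi l n w x)).getD i false = L.getD (l + i) false := by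
      rw [List.getD_eq_getElem _ _ (by simp), List.getElem_ofFn]
      simp only [phi, vFull]
      rfl
    rw [hv, hWlen]
    have hgd : L.getD (l + ↑i) false
        = Bool.xor (X i) (parity ((phiList W X ↑i).drop ↑i)) := by
      have := phiList_getD W X (m := n) (k := i) i.isLt
      rwa [hWlen] at this
    have hseg : (phiList W X ↑i).drop ↑i = (L.drop ↑i).take l := by
      rw [← phiList_take W X (Nat.le_of_lt i.isLt), List.drop_take, hWlen]
      congr 1
      omega
    rw [hgd, hseg]
    have : X ↑i = x i := by simp [hX]
    rw [this]
    cases x i <;> cases parity ((L.drop ↑i).take l) <;> rfl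
  -- Right inverse
  have right : Function.RightInverse (psi l n w) (phi l n w) := by
    intro v
    set V : List Bool := List.ofFn v with hV
    have hVlen : V.length = n := by simp [hV]
    set M : List Bool := W ++ V with hM
    have hMlen : M.length = l + n := by simp [hM, hWlen, hVlen]
    set X : ℕ → Bool := fun m => if h : m < n then psi l n w v ⟨m, h⟩ else false with hX
    have key : ∀ k, k ≤ n → phiList W X k = M.take (l + k) := by
      intro k hk
      induction k with
      | zero => simp [phiList, hM, ← hWlen]
      | succ k ih =>
        rw [phiList, ih (by omega)]
        have hXk : X k = Bool.xor (V.getD k false) (parity ((M.drop k).take l)) := by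
          have hkn : k < n := by omega
          simp only [hX, dif_pos hkn, psi]
          rw [psiList_getD _ _ (by rw [hVlen]; exact hkn), hWlen]
        have hseg : (M.take (l + k)).drop k = (M.drop k).take l := by
          rw [List.drop_take]; congr 1; omega
        rw [hseg, hXk]
        have hx : Bool.xor (Bool.xor (V.getD k false) (parity ((M.drop k).take l)))
            (parity ((M.drop k).take l)) = V.getD k false := by
          cases V.getD k false <;> cases parity ((M.drop k).take l) <;> rfl
        rw [hx]
        have hlk : l + k < M.length := by omega
        have hadd : l + (k + 1) = (l + k) + 1 := by omega
        rw [hadd, List.take_succ]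
        congr 1
        rw [List.getElem?_eq_getElem hlk]
        simp only [Option.toList_some]
        congr 1
        rw [← List.getD_eq_getElem M false hlk, hM,
          List.getD_append_right _ _ _ _ (by rw [hWlen]; omega), hWlen]
        congr 1
        omega
    funext i
    simp only [phi, vFull, ← hW, ← hX]
    rw [key n le_rfl, List.take_of_length_le (le_of_eq hMlen)]
    rw [hM, List.getD_append_right _ _ _ _ (by rw [hWlen]; omega), hWlen]
    have hidx : l + ↑i - l = (i : ℕ) := by omega
    rw [hidx, hV, List.getD_eq_getElem _ _ (by simp), List.getElem_ofFn]
  exact ⟨⟨left.injective, right.surjective⟩, left, right⟩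
end

section
/- Let l ≥ 1 be an integer, let w be chosen uniformly at random from {0,1}^l, and let x = x_1…x_n be generated by a Bernoulli process with P(0) = p ∈ (0,1), independently of w. Set v_{1-l}…v_0 = w and v_1…v_n = φ_{l,w}(x). Then for every integer r with 1 ≤ r ≤ l, every index i with 1-l ≤ i and i + r − 1 ≤ n, and every word g ∈ {0,1}^r, the probability that v_i v_{i+1} … v_{i+r-1} = g equals 2^{-r}. That is, all words of length at most l occur with the uniform probability. -/
open scoped Classical

/-- The probability of the outcome `ω = (w, x)` when `w` is uniform on `{0,1}^l` and
`x_1 … x_n` are i.i.d. letters, each equal to `0` (i.e. `false`) with probability `p`. -/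
noncomputable def probWX (l n : ℕ) (p : ℝ) (ω : (Fin l → Bool) × (Fin n → Bool)) : ℝ :=
  ((2 : ℝ) ^ l)⁻¹ * ∏ i, (if ω.2 i then 1 - p else p)

namespace TF

lemma phiList_length (w : List Bool) (x : ℕ → Bool) (m : ℕ) :
    (phiList w x m).length = w.length + m := by
  induction m with
  | zero => simp [phiList]
  | succ m ih => simp [phiList, ih]; omega

lemma phiList_prefix (w : List Bool) (x : ℕ → Bool) {m m' : ℕ} (h : m ≤ m') :
    phiList w x m <+: phiList w x m' := by
  induction m', h using Nat.le_induction with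
  | base => exact List.prefix_refl _
  | succ m' _ ih => exact ih.trans (by rw [phiList]; exact List.prefix_append _ _)

lemma phiList_getD (w : List Bool) (x : ℕ → Bool) {m m' k : ℕ} (h : m ≤ m')
    (hk : k < w.length + m) :
    (phiList w x m').getD k false = (phiList w x m).getD k false := by
  have hk1 : k < (phiList w x m).length := by rw [phiList_length]; exact hk
  have hk2 : k < (phiList w x m').length := by
    rw [phiList_length]; omega
  rw [List.getD_eq_getElem _ _ hk1, List.getD_eq_getElem _ _ hk2,
    (phiList_prefix w x h).getElem hk1]

def win (l : ℕ) (x : ℕ → Bool) (m : ℕ) (w : Fin l → Bool) : Fin l → Bool :=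
  fun j => (phiList (List.ofFn w) x m).getD (m + j) false

lemma win_zero (l : ℕ) (x : ℕ → Bool) (w : Fin l → Bool) : win l x 0 w = w := by
  funext j
  simp only [win, Nat.zero_add]
  rw [show phiList (List.ofFn w) x 0 = List.ofFn w from rfl,
    List.getD_eq_getElem _ _ (by simpa using j.isLt)]
  simp

lemma drop_phiList (l : ℕ) (x : ℕ → Bool) (m : ℕ) (w : Fin l → Bool) :
    (phiList (List.ofFn w) x m).drop m = List.ofFn (win l x m w) := by
  apply List.ext_getElem
  · simp [phiList_length]
  · intro i h1 h2
    have hlt : m + i < (phiList (List.ofFn w) x m).length := by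
      rw [phiList_length]; simp at h2 ⊢; omega
    simp only [List.getElem_drop, List.getElem_ofFn]
    show _ = (phiList (List.ofFn w) x m).getD (m + i) false
    rw [List.getD_eq_getElem _ _ hlt]

lemma win_succ (l : ℕ) (x : ℕ → Bool) (m : ℕ) (w : Fin l → Bool) (j : Fin l) :
    win l x (m + 1) w j =
      if h : (j : ℕ) + 1 < l then win l x m w ⟨(j : ℕ) + 1, h⟩
      else Bool.xor (x m) (parity (List.ofFn (win l x m w))) := by
  have hlen : (phiList (List.ofFn w) x m).length = l + m := by
    rw [phiList_length]; simp
  rw [show win l x (m+1) w j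
      = (phiList (List.ofFn w) x (m+1)).getD (m + 1 + j) false from rfl]
  rw [phiList]
  split
  · rename_i h
    have hlt : m + 1 + (j : ℕ) < (phiList (List.ofFn w) x m).length := by omega
    rw [List.getD_eq_getElem _ _
        (by simp only [List.length_append, hlen, List.length_cons, List.length_nil]; omega),
      List.getElem_append_left hlt]
    rw [show win l x m w ⟨(j:ℕ)+1, h⟩
        = (phiList (List.ofFn w) x m).getD (m + ((j:ℕ)+1)) false from rfl,
      List.getD_eq_getElem _ _ (by omega)]
    congr 1; omega
  · rename_i h
    have hj : (j : ℕ) = l - 1 := by omega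
    have hpos : m + 1 + (j : ℕ) = (phiList (List.ofFn w) x m).length := by omega
    rw [List.getD_eq_getElem _ _
        (by simp only [List.length_append, hlen, List.length_cons, List.length_nil]; omega)]
    rw [List.getElem_append_right (by omega)]
    simp [hpos, drop_phiList]

lemma parity_cons (a : Bool) (L : List Bool) : parity (a :: L) = Bool.xor a (parity L) := rfl

lemma eq_of_tail_parity {l : ℕ} (hl : 1 ≤ l) (u u' : Fin l → Bool)
    (htail : ∀ i : Fin l, 0 < (i : ℕ) → u i = u' i)
    (hpar : parity (List.ofFn u) = parity (List.ofFn u')) : u = u' := by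
  obtain ⟨l', rfl⟩ : ∃ l', l = l' + 1 := ⟨l - 1, by omega⟩
  have htails : List.ofFn (fun i : Fin l' => u i.succ) = List.ofFn (fun i : Fin l' => u' i.succ) := by
    congr 1; funext i; exact htail i.succ (by simp)
  rw [List.ofFn_succ, List.ofFn_succ, parity_cons, parity_cons, htails] at hpar
  have h0 : u 0 = u' 0 := by
    cases hparity : parity (List.ofFn fun i : Fin l' => u' i.succ) <;>
      simp [hparity] at hpar <;> simp [hpar]
  funext i
  rcases Nat.eq_zero_or_pos (i : ℕ) with h | h
  · have : i = 0 := by ext; simpa using h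
    rw [this]; exact h0
  · exact htail i h

lemma win_bijective (l : ℕ) (hl : 1 ≤ l) (x : ℕ → Bool) (m : ℕ) :
    Function.Bijective (win l x m) := by
  induction m with
  | zero =>
    have : win l x 0 = id := by funext w; exact win_zero l x w
    rw [this]; exact Function.bijective_id
  | succ m ih =>
    have hinj : Function.Injective (win l x (m + 1)) := by
      intro w w' h
      apply ih.injective
      apply eq_of_tail_parity hl _ _ ?_ ?_
      · intro i hi
        have hlt : (i : ℕ) - 1 < l := by omega
        have := congrFun h ⟨(i : ℕ) - 1, hlt⟩
        rw [win_succ, win_succ] at this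
        have hcond : ((⟨(i : ℕ) - 1, hlt⟩ : Fin l) : ℕ) + 1 < l := by simp; omega
        rw [dif_pos hcond, dif_pos hcond] at this
        have hfin : (⟨((⟨(i : ℕ) - 1, hlt⟩ : Fin l) : ℕ) + 1, hcond⟩ : Fin l) = i := by
          ext; simp; omega
        rwa [hfin] at this
      · have hlast : l - 1 < l := by omega
        have := congrFun h ⟨l - 1, hlast⟩
        rw [win_succ, win_succ] at this
        have hcond : ¬ (((⟨l - 1, hlast⟩ : Fin l) : ℕ) + 1 < l) := by simp; omega
        rw [dif_neg hcond, dif_neg hcond] at this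
        cases hxm : x m <;> simpa [hxm] using this
    exact (Finite.injective_iff_bijective).mp hinj

open Finset in
lemma card_filter_Ico (l r d : ℕ) (hd : d + r ≤ l) :
    (univ.filter (fun i : Fin l => d ≤ (i : ℕ) ∧ (i : ℕ) < d + r)).card = r := by
  classical
  rw [← Finset.card_range r]
  apply Finset.card_bij' (i := fun (a : Fin l) _ => (a : ℕ) - d)
    (j := fun (b : ℕ) hb => (⟨d + b, by simp at hb; omega⟩ : Fin l))
  · intro a ha; simp at ha ⊢; try omega
  · intro b hb; simp at hb; ext; simp; try omega
  · intro a ha; simp at ha ⊢; try omega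
  · intro b hb; simp at hb ⊢; try omega

def coordP (l r d : ℕ) (g : ℕ → Bool) (u : Fin l → Bool) : Prop :=
  ∀ i : Fin l, d ≤ (i : ℕ) → (i : ℕ) < d + r → u i = g ((i : ℕ) - d)

open Finset in
lemma card_coordP (l r d : ℕ) (hd : d + r ≤ l) (g : ℕ → Bool) [DecidablePred (coordP l r d g)] :
    (univ.filter (coordP l r d g)).card = 2 ^ (l - r) := by
  classical
  have hset : univ.filter (coordP l r d g) = Fintype.piFinset
      (fun i : Fin l =>
        if d ≤ (i : ℕ) ∧ (i : ℕ) < d + r then ({g ((i : ℕ) - d)} : Finset Bool) else univ) := by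
    ext u
    simp only [mem_filter, mem_univ, true_and, Fintype.mem_piFinset]
    constructor
    · intro h i
      by_cases hc : d ≤ (i : ℕ) ∧ (i : ℕ) < d + r
      · simp [hc, h i hc.1 hc.2]
      · simp [hc]
    · intro h i h1 h2
      have := h i
      simp only [h1, h2, and_self, if_true, mem_singleton] at this
      exact this
  rw [hset, Fintype.card_piFinset]
  have hterm : ∀ i : Fin l,
      (if d ≤ (i : ℕ) ∧ (i : ℕ) < d + r then ({g ((i : ℕ) - d)} : Finset Bool) else univ).card
        = if d ≤ (i : ℕ) ∧ (i : ℕ) < d + r then 1 else 2 := by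
    intro i; split <;> simp
  rw [Finset.prod_congr rfl (fun i _ => hterm i), Finset.prod_ite, Finset.prod_const,
    Finset.prod_const, one_pow, one_mul]
  congr 1
  have := Finset.card_filter_add_card_filter_not
    (s := (univ : Finset (Fin l))) (p := fun i : Fin l => d ≤ (i : ℕ) ∧ (i : ℕ) < d + r)
  rw [card_filter_Ico l r d hd] at this
  simp only [Finset.card_univ, Fintype.card_fin] at this
  omega

open Finset in
lemma card_filter_comp {α : Type*} [Fintype α] [DecidableEq α] (F : α → α)
    (hF : Function.Bijective F) (P : α → Prop) [DecidablePred P] :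
    (univ.filter (fun a => P (F a))).card = (univ.filter P).card := by
  apply Finset.card_bij (i := fun a _ => F a)
  · intro a ha; simp at ha ⊢; exact ha
  · intro a ha b hb h; exact hF.injective h
  · intro b hb
    obtain ⟨a, rfl⟩ := hF.surjective b
    exact ⟨a, by simpa using hb, rfl⟩

end TF

open Finset in
lemma vFull_eq_win (l n : ℕ) (w : Fin l → Bool) (x : Fin n → Bool) {k j r : ℕ}
    (hr2 : r ≤ l) (hk : k + r ≤ l + n) (hj : j < r) :
    vFull l n w x (k + j) =
      TF.win l (fun m => if h : m < n then x ⟨m, h⟩ else false) (min k n) w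
        ⟨k - min k n + j, by omega⟩ := by
  set x' : ℕ → Bool := fun m => if h : m < n then x ⟨m, h⟩ else false with hx'
  rw [vFull, show TF.win l x' (min k n) w ⟨k - min k n + j, by omega⟩
      = (phiList (List.ofFn w) x' (min k n)).getD (min k n + (k - min k n + j)) false from rfl]
  have h1 : min k n + (k - min k n + j) = k + j := by omega
  rw [h1]
  exact TF.phiList_getD _ _ (min_le_right k n) (by simp; omega)

/-- Let `l ≥ 1`, let `w` be uniform on `{0,1}^l`, and let `x = x_1…x_n` be an independent
Bernoulli sequence with `P(0) = p ∈ (0,1)`.  Set `v_{1-l}…v_0 = w`, `v_1…v_n = φ_{l,w}(x)`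
(absolute position `k ∈ {0,…,l+n-1}` of `vFull` holds `v_{k-l+1}`, so the paper index
`i ≥ 1-l` corresponds to `k = i + l - 1 ≥ 0`, and `i + r - 1 ≤ n` to `k + r ≤ l + n`).
Then for every `1 ≤ r ≤ l` and every word `g` of `r` letters, the probability that
`v_i v_{i+1} … v_{i+r-1} = g` equals `2^{-r}`: all words of length at most `l` occur
with the uniform probability. -/
theorem words_of_length_le_l_uniform (l n : ℕ) (hl : 1 ≤ l) (p : ℝ)
    (hp : p ∈ Set.Ioo (0 : ℝ) 1) (r : ℕ) (hr1 : 1 ≤ r) (hr2 : r ≤ l)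
    (k : ℕ) (hk : k + r ≤ l + n) (g : ℕ → Bool) :
    (∑ ω ∈ Finset.univ.filter
        (fun ω : (Fin l → Bool) × (Fin n → Bool) =>
          ∀ j < r, vFull l n ω.1 ω.2 (k + j) = g j),
        probWX l n p ω) = ((2 : ℝ) ^ r)⁻¹ := by
  classical
  have key : ∀ x : Fin n → Bool,
      (Finset.univ.filter (fun w : Fin l → Bool => ∀ j < r, vFull l n w x (k + j) = g j)).card
        = 2 ^ (l - r) := by
    intro x
    set x' : ℕ → Bool := fun m => if h : m < n then x ⟨m, h⟩ else false with hx'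
    set m := min k n with hm
    set d := k - m with hdd
    have hmn : m ≤ n := min_le_right _ _
    have hd : d + r ≤ l := by omega
    have hset : Finset.univ.filter (fun w : Fin l → Bool => ∀ j < r, vFull l n w x (k + j) = g j)
        = Finset.univ.filter (fun w : Fin l → Bool =>
            TF.coordP l r d g (TF.win l x' m w)) := by
      ext w
      simp only [Finset.mem_filter, Finset.mem_univ, true_and]
      constructor
      · intro h i h1 h2
        have hj : (i : ℕ) - d < r := by omega
        have h3 := h _ hj
        rw [vFull_eq_win l n w x hr2 hk hj] at h3
        have hfin : (⟨k - min k n + ((i : ℕ) - d), by omega⟩ : Fin l) = i := by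
          ext; simp; omega
        rwa [hfin] at h3
      · intro h j hj
        rw [vFull_eq_win l n w x hr2 hk hj]
        have h3 := h ⟨k - min k n + j, by omega⟩ (by simp; try omega) (by simp; try omega)
        have : k - min k n + j - d = j := by omega
        rwa [this] at h3
    rw [hset,
      TF.card_filter_comp (TF.win l x' m) (TF.win_bijective l hl x' m) (TF.coordP l r d g),
      TF.card_coordP l r d hd g]
  rw [Finset.sum_filter, Fintype.sum_prod_type_right]
  have hx1 : ∀ x : Fin n → Bool,
      (∑ w : Fin l → Bool,
          if (∀ j < r, vFull l n w x (k + j) = g j) then probWX l n p (w, x) else 0)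
        = (2 ^ (l - r) : ℝ) * (((2 : ℝ) ^ l)⁻¹ * ∏ i, (if x i then 1 - p else p)) := by
    intro x
    rw [← Finset.sum_filter]
    have hconst : ∀ w : Fin l → Bool,
        probWX l n p (w, x) = ((2 : ℝ) ^ l)⁻¹ * ∏ i, (if x i then 1 - p else p) :=
      fun w => rfl
    rw [Finset.sum_congr rfl (fun w _ => hconst w), Finset.sum_const, key x,
      nsmul_eq_mul]
    push_cast
    ring
  rw [Finset.sum_congr rfl (fun x _ => hx1 x)]
  rw [← Finset.mul_sum]
  have hsum : (∑ x : Fin n → Bool, ((2 : ℝ) ^ l)⁻¹ * ∏ i, (if x i then 1 - p else p))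
      = ((2 : ℝ) ^ l)⁻¹ := by
    rw [← Finset.mul_sum]
    have : (∑ x : Fin n → Bool, ∏ i, (if x i then (1 : ℝ) - p else p)) = 1 := by
      rw [← Fintype.prod_sum (fun (_ : Fin n) (b : Bool) => if b then (1 : ℝ) - p else p)]
      simp
    rw [this, mul_one]
  rw [hsum]
  have h2 : (2 : ℝ) ^ l = 2 ^ (l - r) * 2 ^ r := by
    rw [← pow_add]; congr 1; omega
  rw [h2, mul_inv, ← mul_assoc, mul_inv_cancel₀ (by positivity), one_mul]
end

section
/- For every integer l ≥ 1 and every p ∈ (0,1), the uniform distribution on {0,1}^l is a stationary distribution of the Markov kernel on state space {0,1}^l associated with the two-faced process T_l with parameter p, i.e., the kernel that maps a state u = u_1…u_l to the state u_2…u_l b, where b = 0 with probability p and b = 1 with probability 1 − p if Σ_{j=1}^{l} u_j is even, and b = 0 with probability 1 − p and b = 1 with probability p if that sum is odd. -/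
open scoped ENNReal

/-- The Markov kernel on the state space `{0,1}^l` associated with the two-faced process
`T_l` with parameter `p`: a state `u = u_1…u_l` moves to `u_2…u_l b`, where the new letter
`b` equals `0` (i.e. `false`) with probability `p` and `1` with probability `1 - p` when
`Σ_j u_j` is even, and equals `0` with probability `1 - p` and `1` with probability `p`
when that sum is odd.  (`PMF.bernoulli q` puts mass `q` on `true`.) -/
noncomputable def twoFacedKernel (l : ℕ) (p : ℝ≥0∞) (hp : p ≤ 1) (u : Fin l → Bool) :
    PMF (Fin l → Bool) :=
  (PMF.bernoulli (if Even (∑ j : Fin l, (if u j then 1 else 0 : ℕ)) then 1 - p else p).toNNReal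
      (by split
          · simpa using ENNReal.toNNReal_mono ENNReal.one_ne_top (tsub_le_self : 1 - p ≤ 1)
          · simpa using ENNReal.toNNReal_mono ENNReal.one_ne_top hp)).map
    (fun b j => if h : (j : ℕ) + 1 < l then u ⟨(j : ℕ) + 1, h⟩ else b)

lemma shift_eq_snoc (n : ℕ) (u : Fin (n+1) → Bool) :
    (fun (b : Bool) (j : Fin (n+1)) => if h : (j : ℕ) + 1 < n + 1 then u ⟨(j : ℕ) + 1, h⟩ else b)
      = fun b => (Fin.snoc (fun j : Fin n => u j.succ) b : Fin (n+1) → Bool) := by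
  funext b j
  refine Fin.lastCases ?_ (fun i => ?_) j
  · simp [Fin.snoc_last]
  · have hi : ((i.castSucc : Fin (n+1)) : ℕ) + 1 < n + 1 := by
      have := i.isLt; simp only [Fin.coe_castSucc]; omega
    rw [dif_pos hi, Fin.snoc_castSucc]
    exact congrArg u (Fin.ext (by simp))

lemma kernel_apply (n : ℕ) (p : ℝ≥0∞) (hp : p ≤ 1) (u v : Fin (n+1) → Bool) :
    twoFacedKernel (n+1) p hp u v =
      if Fin.init v = (fun j : Fin n => u j.succ) then
        PMF.bernoulli (if Even (∑ j : Fin (n+1), (if u j then 1 else 0 : ℕ)) then 1 - p else p).toNNReal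
          (by split
              · simpa using ENNReal.toNNReal_mono ENNReal.one_ne_top (tsub_le_self : 1 - p ≤ 1)
              · simpa using ENNReal.toNNReal_mono ENNReal.one_ne_top hp) (v (Fin.last n))
      else 0 := by
  rw [twoFacedKernel]
  simp only [shift_eq_snoc]
  rw [PMF.map_apply, tsum_fintype, Fintype.sum_bool]
  have key : ∀ b, (v = Fin.snoc (fun j : Fin n => u j.succ) b) ↔
      (Fin.init v = (fun j : Fin n => u j.succ) ∧ v (Fin.last n) = b) := by
    intro b
    constructor
    · rintro rfl; exact ⟨Fin.init_snoc _ _, Fin.snoc_last _ _⟩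
    · rintro ⟨h1, h2⟩; rw [← h1, ← h2, Fin.snoc_init_self]
  by_cases hiv : Fin.init v = fun j : Fin n => u j.succ
  · cases hb : v (Fin.last n) <;> simp [key, hiv, hb]
  · simp [key, hiv]

/-- For every integer `l ≥ 1` and every `p ∈ (0,1)`, the uniform distribution on `{0,1}^l`
is a stationary distribution of the Markov kernel on `{0,1}^l` associated with the
two-faced process `T_l` with parameter `p`. -/
theorem uniform_stationary_twoFaced (l : ℕ) (hl : 1 ≤ l) (p : ℝ≥0∞)
    (hp0 : 0 < p) (hp1 : p < 1) :
    (PMF.uniformOfFintype (Fin l → Bool)).bind (twoFacedKernel l p hp1.le) =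
      PMF.uniformOfFintype (Fin l → Bool) := by
  obtain ⟨n, rfl⟩ : ∃ n, l = n + 1 := ⟨l - 1, by omega⟩
  have hp : p ≤ 1 := hp1.le
  have h1p : 1 - (1 - p) = p := ENNReal.sub_sub_cancel ENNReal.one_ne_top hp
  have hpt : p ≠ ⊤ := ne_top_of_le_ne_top ENNReal.one_ne_top hp
  have h1pt : 1 - p ≠ ⊤ := ENNReal.sub_ne_top ENNReal.one_ne_top
  ext v
  rw [PMF.bind_apply, tsum_fintype]
  simp only [PMF.uniformOfFintype_apply]
  rw [← Finset.mul_sum]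
  have hsum : ∑ u : Fin (n+1) → Bool, twoFacedKernel (n+1) p hp u v = 1 := by
    rw [← Equiv.sum_comp (Fin.consEquiv (fun _ : Fin (n+1) => Bool))
        (fun u => twoFacedKernel (n+1) p hp u v), Fintype.sum_prod_type]
    simp only [Fin.consEquiv_apply, kernel_apply, Fin.cons_succ]
    rw [Fintype.sum_bool]
    simp only [Finset.sum_ite_eq, Finset.mem_univ, if_true]
    simp only [PMF.bernoulli_apply, Fin.sum_univ_succ, Fin.cons_zero, Fin.cons_succ,
      if_true, Bool.false_eq_true, if_false, zero_add, Nat.add_comm 1, Nat.even_add_one]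
    by_cases hs : Even (Finset.filter (fun x => Fin.init v x = true) Finset.univ).card
    · cases hb : v (Fin.last n) <;>
        simp [hs, Nat.not_even_iff_odd, ENNReal.coe_sub, ENNReal.coe_toNNReal hpt, ENNReal.coe_toNNReal h1pt, h1p, tsub_add_cancel_of_le hp, add_tsub_cancel_of_le hp]
    · cases hb : v (Fin.last n) <;>
        simp [hs, Nat.not_even_iff_odd, ENNReal.coe_sub, ENNReal.coe_toNNReal hpt, ENNReal.coe_toNNReal h1pt, h1p, tsub_add_cancel_of_le hp, add_tsub_cancel_of_le hp]
  rw [hsum, mul_one]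
end
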